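/- arXiv:2101.09155 — 2 statements merged into one kernel-verified Lean document; each statement's English description precedes it below -/
import Mathlib

section
/- Let φ : ℝ → ℝ be three times continuously differentiable on an open interval containing [m,M] with φ''' ≥ 0 there (φ is 3-convex). Suppose φ∘f ∈ L and the functions t ↦ (f(t) − m)·φ'(f(t)) and t ↦ (M − f(t))·φ'(f(t)) belong to L. Then A(f) ∈ [m,M] and, writing Δ = (φ(M) − φ(m))/(M − m), the Jensen-type bounds hold: (A(f) − m)·[Δ − (φ'(A(f)) + φ'(m))/2] + (M − A(f))·[Δ − φ'(M)/2] − (1/2)·A((M·1 − f)·(φ'∘f)) ≤ A(φ∘f) − φ(A(f)) ≤ (M − A(f))·[(φ'(A(f)) + φ'(M))/2 − Δ] − (A(f) − m)·[Δ − φ'(m)/2] + (1/2)·A((f − m·1)·(φ'∘f)). -/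
/-!
Since `φ''' ≥ 0`, the derivative `φ'` is convex, so on any `[u, v]` it lies below its chord;
integrating gives the trapezoid bound `φ v - φ u ≤ (v - u) * (φ' u + φ' v) / 2`. Applied at
`(f t, M)` and `(m, f t)` for every `t` and pushed through the positive normalized functional `A`,
it bounds `A (φ ∘ f)` from below and above; applied at `(m, A f)` and `(A f, M)` it bounds
`φ (A f)`, and `Δ * (M - m) = φ M - φ m` combines the two into the stated inequalities.
-/

open Set

theorem sub_le_trapezoid_of_convexOn_deriv {φ : ℝ → ℝ} {u v : ℝ} (huv : u ≤ v)
    (hcont : ContinuousOn φ (Icc u v)) (hdiff : DifferentiableOn ℝ φ (Ioo u v))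
    (hconv : ConvexOn ℝ (Icc u v) (deriv φ)) :
    φ v - φ u ≤ (v - u) * (deriv φ u + deriv φ v) / 2 := by
  rcases huv.eq_or_lt with rfl | huv
  · simp
  set s := (deriv φ v - deriv φ u) / (v - u)
  -- `deriv φ u * (x - u) + s * (x - u) ^ 2 / 2` is a primitive of the chord of `deriv φ`
  have hanti : AntitoneOn (fun x => φ x - (deriv φ u * (x - u) + s * (x - u) ^ 2 / 2))
      (Icc u v) := by
    refine antitoneOn_of_hasDerivWithinAt_nonpos (convex_Icc u v) (by fun_prop)
      (f' := fun x => deriv φ x - (deriv φ u + s * (x - u))) (fun x hx => ?_) (fun x hx => ?_)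
    · rw [interior_Icc] at hx ⊢
      have hφx := (hdiff.differentiableAt (isOpen_Ioo.mem_nhds hx)).hasDerivAt
      have hΦ : HasDerivAt (fun y => deriv φ u * (y - u) + s * (y - u) ^ 2 / 2)
          (deriv φ u + s * (x - u)) x :=
        ((((hasDerivAt_id' x).sub_const u).const_mul (deriv φ u)).add
          ((((hasDerivAt_id' x).sub_const u).pow 2).const_mul s |>.div_const 2)).congr_deriv
          (by norm_num; ring)
      exact (hφx.sub hΦ).hasDerivWithinAt
    · rw [interior_Icc] at hx
      have hchord := hconv.secant_mono_aux2 (left_mem_Icc.2 huv.le) (right_mem_Icc.2 huv.le)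
        hx.1 hx.2
      rw [div_le_iff₀ (sub_pos.2 hx.1)] at hchord
      linarith
  have hend := hanti (left_mem_Icc.2 huv.le) (right_mem_Icc.2 huv.le) huv.le
  simp only [sub_self, mul_zero, zero_pow two_ne_zero, add_zero, zero_div] at hend
  have hs : s * (v - u) ^ 2 = (deriv φ v - deriv φ u) * (v - u) := by
    rw [sq, ← mul_assoc, div_mul_cancel₀ _ (sub_pos.2 huv).ne']
  linarith

theorem convexOn_deriv_of_iteratedDeriv_three_nonneg {φ : ℝ → ℝ} {s : Set ℝ} (hs : IsOpen s)
    (hconv : Convex ℝ s) (hφ : ContDiffOn ℝ 3 φ s) (hφ3 : ∀ x ∈ s, 0 ≤ iteratedDeriv 3 φ x) :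
    ConvexOn ℝ s (deriv φ) := by
  have hφ' : ContDiffOn ℝ 2 (deriv φ) s := hφ.deriv_of_isOpen hs (by norm_num)
  refine convexOn_of_deriv2_nonneg' hconv (hφ'.differentiableOn (by norm_num))
    ((hφ'.deriv_of_isOpen (m := 1) hs (by norm_num)).differentiableOn one_ne_zero) fun x hx => ?_
  simpa only [iteratedDeriv_eq_iterate, Function.iterate_succ_apply] using hφ3 x hx

theorem sub_le_trapezoid_of_iteratedDeriv_three_nonneg {φ : ℝ → ℝ} {s : Set ℝ} (hs : IsOpen s)
    (hconv : Convex ℝ s) (hφ : ContDiffOn ℝ 3 φ s) (hφ3 : ∀ x ∈ s, 0 ≤ iteratedDeriv 3 φ x)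
    {u v : ℝ} (hu : u ∈ s) (hv : v ∈ s) (huv : u ≤ v) :
    φ v - φ u ≤ (v - u) * (deriv φ u + deriv φ v) / 2 :=
  have hsub : Icc u v ⊆ s := hconv.ordConnected.out hu hv
  sub_le_trapezoid_of_convexOn_deriv huv (hφ.continuousOn.mono hsub)
    ((hφ.differentiableOn (by norm_num)).mono (Ioo_subset_Icc_self.trans hsub))
    ((convexOn_deriv_of_iteratedDeriv_three_nonneg hs hconv hφ hφ3).subset hsub (convex_Icc u v))

section PositiveFunctional

variable {E : Type*} {L : Submodule ℝ (E → ℝ)} (A : L →ₗ[ℝ] ℝ)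

theorem map_le_map_of_forall_le (hApos : ∀ g : L, (∀ t : E, 0 ≤ g.1 t) → 0 ≤ A g) {g h : L}
    (hgh : ∀ t, g.1 t ≤ h.1 t) : A g ≤ A h := by
  have := hApos (h - g) fun t => sub_nonneg.2 (hgh t)
  rwa [map_sub, sub_nonneg] at this

theorem map_mem_Icc_of_forall_mem_Icc (hApos : ∀ g : L, (∀ t : E, 0 ≤ g.1 t) → 0 ≤ A g)
    {h1L : (fun _ : E => (1 : ℝ)) ∈ L} (hAnorm : A ⟨fun _ => 1, h1L⟩ = 1) {f : L} {m M : ℝ}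
    (hfm : ∀ t, m ≤ f.1 t) (hfM : ∀ t, f.1 t ≤ M) : A f ∈ Icc m M := by
  have hm := map_le_map_of_forall_le A hApos (g := m • ⟨_, h1L⟩) (h := f)
    fun t => by simpa using hfm t
  have hM := map_le_map_of_forall_le A hApos (g := f) (h := M • ⟨_, h1L⟩)
    fun t => by simpa using hfM t
  simp only [map_smul, hAnorm, smul_eq_mul, mul_one] at hm hM
  exact ⟨hm, hM⟩

theorem map_le_of_forall_le_affine (hApos : ∀ g : L, (∀ t : E, 0 ≤ g.1 t) → 0 ≤ A g)
    {h1L : (fun _ : E => (1 : ℝ)) ∈ L} (hAnorm : A ⟨fun _ => 1, h1L⟩ = 1) {g h₁ h₂ : L}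
    {c c₁ c₂ : ℝ} (hg : ∀ t, g.1 t ≤ c + c₁ * h₁.1 t + c₂ * h₂.1 t) :
    A g ≤ c + c₁ * A h₁ + c₂ * A h₂ := by
  have := map_le_map_of_forall_le A hApos (g := g) (h := c • ⟨_, h1L⟩ + c₁ • h₁ + c₂ • h₂)
    fun t => by simpa using hg t
  simpa only [map_add, map_smul, hAnorm, smul_eq_mul, mul_one] using this

theorem affine_le_map_of_forall_affine_le (hApos : ∀ g : L, (∀ t : E, 0 ≤ g.1 t) → 0 ≤ A g)
    {h1L : (fun _ : E => (1 : ℝ)) ∈ L} (hAnorm : A ⟨fun _ => 1, h1L⟩ = 1) {g h₁ h₂ : L}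
    {c c₁ c₂ : ℝ} (hg : ∀ t, c + c₁ * h₁.1 t + c₂ * h₂.1 t ≤ g.1 t) :
    c + c₁ * A h₁ + c₂ * A h₂ ≤ A g := by
  have := map_le_map_of_forall_le A hApos (g := c • ⟨_, h1L⟩ + c₁ • h₁ + c₂ • h₂) (h := g)
    fun t => by simpa using hg t
  simpa only [map_add, map_smul, hAnorm, smul_eq_mul, mul_one] using this

end PositiveFunctional

theorem jensen_three_convex_from_tm2_general {E : Type*} (L : Submodule ℝ (E → ℝ))
    (h1L : (fun _ : E => (1 : ℝ)) ∈ L)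
    (A : L →ₗ[ℝ] ℝ)
    (hApos : ∀ g : L, (∀ t : E, 0 ≤ g.1 t) → 0 ≤ A g)
    (hAnorm : A ⟨fun _ => 1, h1L⟩ = 1)
    (m M : ℝ) (hmM : m < M)
    (f : E → ℝ) (hfL : f ∈ L) (hfm : ∀ t, m ≤ f t) (hfM : ∀ t, f t ≤ M)
    (φ : ℝ → ℝ) (a b : ℝ) (ham : a < m) (hMb : M < b)
    (hφ : ContDiffOn ℝ 3 φ (Set.Ioo a b))
    (hφ3 : ∀ x ∈ Set.Ioo a b, 0 ≤ iteratedDeriv 3 φ x)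
    (hφfL : (fun t => φ (f t)) ∈ L)
    (hg1L : (fun t => (f t - m) * deriv φ (f t)) ∈ L)
    (hg2L : (fun t => (M - f t) * deriv φ (f t)) ∈ L) :
    let Δ := (φ M - φ m) / (M - m)
    A ⟨f, hfL⟩ ∈ Set.Icc m M
      ∧ (A ⟨f, hfL⟩ - m) * (Δ - (deriv φ (A ⟨f, hfL⟩) + deriv φ m) / 2)
            + (M - A ⟨f, hfL⟩) * (Δ - deriv φ M / 2)
            - (1 / 2) * A ⟨fun t => (M - f t) * deriv φ (f t), hg2L⟩
          ≤ A ⟨fun t => φ (f t), hφfL⟩ - φ (A ⟨f, hfL⟩)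
      ∧ A ⟨fun t => φ (f t), hφfL⟩ - φ (A ⟨f, hfL⟩)
          ≤ (M - A ⟨f, hfL⟩) * ((deriv φ (A ⟨f, hfL⟩) + deriv φ M) / 2 - Δ)
              - (A ⟨f, hfL⟩ - m) * (Δ - deriv φ m / 2)
              + (1 / 2) * A ⟨fun t => (f t - m) * deriv φ (f t), hg1L⟩ := by
  intro Δ
  have hΔ : Δ * (M - m) = φ M - φ m := div_mul_cancel₀ _ (sub_ne_zero.2 hmM.ne')
  have hAf := map_mem_Icc_of_forall_mem_Icc A hApos hAnorm (f := ⟨f, hfL⟩) hfm hfM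
  have hm : m ∈ Ioo a b := ⟨ham, hmM.trans hMb⟩
  have hM : M ∈ Ioo a b := ⟨ham.trans hmM, hMb⟩
  have hf : ∀ t, f t ∈ Ioo a b := fun t => ⟨ham.trans_le (hfm t), (hfM t).trans_lt hMb⟩
  have hAf' : A ⟨f, hfL⟩ ∈ Ioo a b := ⟨ham.trans_le hAf.1, hAf.2.trans_lt hMb⟩
  have trapezoid {u v : ℝ} (hu : u ∈ Ioo a b) (hv : v ∈ Ioo a b) (huv : u ≤ v) :=
    sub_le_trapezoid_of_iteratedDeriv_three_nonneg isOpen_Ioo (convex_Ioo a b) hφ hφ3 hu hv huv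
  refine ⟨hAf, ?_, ?_⟩
  · have hP := affine_le_map_of_forall_affine_le A hApos hAnorm (g := ⟨_, hφfL⟩)
      (h₁ := ⟨f, hfL⟩) (h₂ := ⟨_, hg2L⟩) (c := φ M - deriv φ M / 2 * M) (c₁ := deriv φ M / 2)
      (c₂ := -1 / 2) fun t => by have := trapezoid (hf t) hM (hfM t); dsimp only; linarith
    linarith [trapezoid hm hAf' hAf.1]
  · have hP := map_le_of_forall_le_affine A hApos hAnorm (g := ⟨_, hφfL⟩)
      (h₁ := ⟨f, hfL⟩) (h₂ := ⟨_, hg1L⟩) (c := φ m - deriv φ m / 2 * m) (c₁ := deriv φ m / 2)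
      (c₂ := 1 / 2) fun t => by have := trapezoid hm (hf t) (hfm t); dsimp only; linarith
    linarith [trapezoid hAf' hM hAf.2]

/-- Jensen type inequality for 3-convex functions derived from Theorem 2.2
(Remark 2.3 (i) of the paper). -/
theorem jensen_three_convex_from_tm2 {E : Type*} [Nonempty E] (L : Submodule ℝ (E → ℝ))
    (h1L : (fun _ : E => (1 : ℝ)) ∈ L)
    (A : L →ₗ[ℝ] ℝ)
    (hApos : ∀ g : L, (∀ t : E, 0 ≤ g.1 t) → 0 ≤ A g)
    (hAnorm : A ⟨fun _ => 1, h1L⟩ = 1)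
    (m M : ℝ) (hmM : m < M)
    (f : E → ℝ) (hfL : f ∈ L) (hfm : ∀ t, m ≤ f t) (hfM : ∀ t, f t ≤ M)
    (φ : ℝ → ℝ) (a b : ℝ) (ham : a < m) (hMb : M < b)
    (hφ : ContDiffOn ℝ 3 φ (Set.Ioo a b))
    (hφ3 : ∀ x ∈ Set.Ioo a b, 0 ≤ iteratedDeriv 3 φ x)
    (hφfL : (fun t => φ (f t)) ∈ L)
    (hg1L : (fun t => (f t - m) * deriv φ (f t)) ∈ L)
    (hg2L : (fun t => (M - f t) * deriv φ (f t)) ∈ L) :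
    let Δ := (φ M - φ m) / (M - m)
    A ⟨f, hfL⟩ ∈ Set.Icc m M
      ∧ (A ⟨f, hfL⟩ - m) * (Δ - (deriv φ (A ⟨f, hfL⟩) + deriv φ m) / 2)
            + (M - A ⟨f, hfL⟩) * (Δ - deriv φ M / 2)
            - (1 / 2) * A ⟨fun t => (M - f t) * deriv φ (f t), hg2L⟩
          ≤ A ⟨fun t => φ (f t), hφfL⟩ - φ (A ⟨f, hfL⟩)
      ∧ A ⟨fun t => φ (f t), hφfL⟩ - φ (A ⟨f, hfL⟩)
          ≤ (M - A ⟨f, hfL⟩) * ((deriv φ (A ⟨f, hfL⟩) + deriv φ M) / 2 - Δ)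
              - (A ⟨f, hfL⟩ - m) * (Δ - deriv φ m / 2)
              + (1 / 2) * A ⟨fun t => (f t - m) * deriv φ (f t), hg1L⟩ :=
  jensen_three_convex_from_tm2_general L h1L A hApos hAnorm m M hmM f hfL hfm hfM φ a b ham hMb hφ
    hφ3 hφfL hg1L hg2L
end

section
/- Let p and r be the Zipf–Mandelbrot distributions with parameters (N, q₁, s₁) and (N, q₂, s₂) respectively, let m = min_{1≤i≤N} p_i/r_i and M = max_{1≤i≤N} p_i/r_i, and assume m < M. Let f : ℝ → ℝ be three times continuously differentiable on an open interval containing [m,M] with f''' ≥ 0 there (f is 3-convex). Then, writing Δ = (f(M) − f(m))/(M − m): (1 − m)·[Δ − f'(m)/2] − (1/2)·∑_{i=1}^N (p_i − m·r_i)·f'(p_i/r_i) ≤ (M − 1)/(M − m)·f(m) + (1 − m)/(M − m)·f(M) − ∑_{i=1}^N r_i·f(p_i/r_i) ≤ (1/2)·∑_{i=1}^N (M·r_i − p_i)·f'(p_i/r_i) − (M − 1)·[Δ − f'(M)/2]. -/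
/-!
For a 3-convex `f` the derivative `f'` is convex, so the trapezoid rule overestimates its
integral: `f v - f u ≤ (v - u) * (f' u + f' v) / 2` for `u ≤ v`. Apply this on `[m, xᵢ]` and on
`[xᵢ, M]`, where `xᵢ = pᵢ / rᵢ`, multiply by `rᵢ` and sum. Since `∑ pᵢ = ∑ rᵢ = 1`, the middle
expression equals `∑ rᵢ (f m + (xᵢ - m) Δ - f xᵢ)`, the weighted gap between `f` and its chord
over `[m, M]`, and the two summed trapezoid estimates are exactly the two bounds.
-/

open Finset

theorem sub_le_trapezoid_of_convexOn_deriv_s15 {S : Set ℝ} {f f' f'' : ℝ → ℝ}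
    (hconv : ConvexOn ℝ S f') (hf : ∀ x ∈ S, HasDerivAt f (f' x) x)
    (hf' : ∀ x ∈ S, HasDerivAt f' (f'' x) x) {u v : ℝ} (hu : u ∈ S) (hv : v ∈ S)
    (huv : u ≤ v) : f v - f u ≤ (v - u) * (f' u + f' v) / 2 := by
  have hsub : Set.Icc u v ⊆ S := hconv.1.ordConnected.out hu hv
  set g := fun t => 2 * (f t - f u) - (t - u) * (f' u + f' t)
  have hg : ∀ t ∈ S, HasDerivAt g (f' t - f' u - (t - u) * f'' t) t := fun t ht => by
    refine ((((hf t ht).sub_const (f u)).const_mul 2).sub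
      (((hasDerivAt_id t).sub_const u).mul ((hf' t ht).const_add (f' u)))).congr_deriv ?_
    simp only [id_eq]; ring
  have hanti : AntitoneOn g (Set.Icc u v) := by
    refine antitoneOn_of_hasDerivWithinAt_nonpos (convex_Icc u v)
      (fun t ht => (hg t (hsub ht)).continuousAt.continuousWithinAt)
      (fun t ht => (hg t (hsub (interior_subset ht))).hasDerivWithinAt) fun t ht => ?_
    rw [interior_Icc] at ht
    have hslope := hconv.slope_le_of_hasDerivAt hu (hsub (Set.Ioo_subset_Icc_self ht)) ht.1
      (hf' t (hsub (Set.Ioo_subset_Icc_self ht)))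
    rw [slope_def_field, div_le_iff₀ (sub_pos.2 ht.1)] at hslope
    linarith
  have hgv : g v ≤ g u := hanti ⟨le_rfl, huv⟩ ⟨huv, le_rfl⟩ huv
  simp only [g, sub_self, zero_mul, mul_zero] at hgv
  linarith

theorem ContDiffOn.convexOn_deriv {s : Set ℝ} {f : ℝ → ℝ} (hs : IsOpen s) (hs' : Convex ℝ s)
    (hf : ContDiffOn ℝ 3 f s) (hf3 : ∀ x ∈ s, 0 ≤ iteratedDeriv 3 f x) :
    ConvexOn ℝ s (deriv f) := by
  have hf' : ContDiffOn ℝ 2 (deriv f) s := hf.deriv_of_isOpen hs (by norm_num)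
  have hf'' : ContDiffOn ℝ 1 (deriv (deriv f)) s := hf'.deriv_of_isOpen hs (by norm_num)
  refine convexOn_of_deriv2_nonneg hs' hf'.continuousOn ?_ ?_ ?_ <;> rw [hs.interior_eq]
  · exact hf'.differentiableOn (by norm_num)
  · exact hf''.differentiableOn (by norm_num)
  · simpa [iteratedDeriv_eq_iterate] using hf3

theorem ContDiffOn.sub_le_trapezoid {s : Set ℝ} {f : ℝ → ℝ} (hs : IsOpen s) (hs' : Convex ℝ s)
    (hf : ContDiffOn ℝ 3 f s) (hf3 : ∀ x ∈ s, 0 ≤ iteratedDeriv 3 f x) {u v : ℝ}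
    (hu : u ∈ s) (hv : v ∈ s) (huv : u ≤ v) :
    f v - f u ≤ (v - u) * (deriv f u + deriv f v) / 2 :=
  have hf' : ContDiffOn ℝ 2 (deriv f) s := hf.deriv_of_isOpen hs (by norm_num)
  sub_le_trapezoid_of_convexOn_deriv_s15 (hf.convexOn_deriv hs hs' hf3)
    (fun x hx => ((hf.differentiableOn (by norm_num)).differentiableAt
      (hs.mem_nhds hx)).hasDerivAt)
    (fun x hx => ((hf'.differentiableOn (by norm_num)).differentiableAt
      (hs.mem_nhds hx)).hasDerivAt) hu hv huv

section WeightedBounds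

variable {ι : Type*} [Fintype ι] {p r : ι → ℝ} {m M : ℝ} {f f' : ℝ → ℝ}

theorem chord_sub_divergence_eq_sum (hp : ∑ i, p i = 1) (hr : ∑ i, r i = 1) (hmM : m < M) :
    (M - 1) / (M - m) * f m + (1 - m) / (M - m) * f M - ∑ i, r i * f (p i / r i) =
      ∑ i, (r i * f m + (p i - m * r i) * ((f M - f m) / (M - m)) - r i * f (p i / r i)) := by
  simp only [sum_sub_distrib, sum_add_distrib, ← sum_mul, hp, hr, ← mul_sum]
  field_simp [sub_ne_zero.2 hmM.ne']
  ring

theorem le_chord_sub_divergence_of_trapezoid (hpos : ∀ i, 0 < r i) (hp : ∑ i, p i = 1)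
    (hr : ∑ i, r i = 1) (hmM : m < M)
    (htrap : ∀ i, f (p i / r i) - f m ≤ (p i / r i - m) * (f' m + f' (p i / r i)) / 2) :
    (1 - m) * ((f M - f m) / (M - m) - f' m / 2)
        - 1 / 2 * ∑ i, (p i - m * r i) * f' (p i / r i)
      ≤ (M - 1) / (M - m) * f m + (1 - m) / (M - m) * f M - ∑ i, r i * f (p i / r i) := by
  rw [chord_sub_divergence_eq_sum hp hr hmM]
  have hlhs : (1 - m) * ((f M - f m) / (M - m) - f' m / 2)
        - 1 / 2 * ∑ i, (p i - m * r i) * f' (p i / r i) =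
      ∑ i, ((p i - m * r i) * ((f M - f m) / (M - m) - f' m / 2)
        - 1 / 2 * ((p i - m * r i) * f' (p i / r i))) := by
    simp only [sum_sub_distrib, ← sum_mul, ← mul_sum, hp, hr, mul_one]
  rw [hlhs]
  refine sum_le_sum fun i _ => ?_
  have hx : r i * (p i / r i) = p i := mul_div_cancel₀ _ (hpos i).ne'
  linear_combination mul_le_mul_of_nonneg_left (htrap i) (hpos i).le
    + (f' m + f' (p i / r i)) / 2 * hx

theorem chord_sub_divergence_le_of_trapezoid (hpos : ∀ i, 0 < r i) (hp : ∑ i, p i = 1)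
    (hr : ∑ i, r i = 1) (hmM : m < M)
    (htrap : ∀ i, f M - f (p i / r i) ≤ (M - p i / r i) * (f' (p i / r i) + f' M) / 2) :
    (M - 1) / (M - m) * f m + (1 - m) / (M - m) * f M - ∑ i, r i * f (p i / r i)
      ≤ 1 / 2 * ∑ i, (M * r i - p i) * f' (p i / r i)
        - (M - 1) * ((f M - f m) / (M - m) - f' M / 2) := by
  rw [chord_sub_divergence_eq_sum hp hr hmM]
  have hrhs : 1 / 2 * ∑ i, (M * r i - p i) * f' (p i / r i)
        - (M - 1) * ((f M - f m) / (M - m) - f' M / 2) =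
      ∑ i, (1 / 2 * ((M * r i - p i) * f' (p i / r i))
        - (M * r i - p i) * ((f M - f m) / (M - m) - f' M / 2)) := by
    simp only [sum_sub_distrib, ← sum_mul, ← mul_sum, hp, hr, mul_one]
  rw [hrhs]
  refine sum_le_sum fun i _ => ?_
  have hx : r i * (p i / r i) = p i := mul_div_cancel₀ _ (hpos i).ne'
  have hΔ : (f M - f m) / (M - m) * (M - m) = f M - f m :=
    div_mul_cancel₀ _ (sub_ne_zero.2 hmM.ne')
  linear_combination mul_le_mul_of_nonneg_left (htrap i) (hpos i).le
    - (f' M + f' (p i / r i)) / 2 * hx + r i * hΔ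

end WeightedBounds

theorem sum_one_div_mul_sum_one_div {ι : Type*} [Fintype ι] {w : ι → ℝ}
    (hw : ∑ j, 1 / w j ≠ 0) : ∑ i, 1 / (w i * ∑ j, 1 / w j) = 1 := by
  simp only [div_mul_eq_div_div, ← sum_div, div_self hw]

/-- The index `i : Fin N` stands for the rank `i + 1`. -/
noncomputable def zipfMandelbrot (N : ℕ) (q s : ℝ) (i : Fin N) : ℝ :=
  1 / ((((i : ℕ) : ℝ) + 1 + q) ^ s * ∑ j : Fin N, 1 / ((((j : ℕ) : ℝ) + 1 + q) ^ s))

section ZipfMandelbrot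

variable {N : ℕ} {q : ℝ} (s : ℝ)

theorem zipfMandelbrot_pos (hq : 0 ≤ q) (i : Fin N) : 0 < zipfMandelbrot N q s i := by
  have hsum : 0 < ∑ j : Fin N, 1 / ((((j : ℕ) : ℝ) + 1 + q) ^ s) :=
    sum_pos (fun j _ => by positivity) ⟨i, mem_univ i⟩
  unfold zipfMandelbrot
  positivity

theorem sum_zipfMandelbrot (hN : 0 < N) (hq : 0 ≤ q) : ∑ i, zipfMandelbrot N q s i = 1 :=
  sum_one_div_mul_sum_one_div (sum_pos (fun j _ => by positivity) ⟨⟨0, hN⟩, mem_univ _⟩).ne'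

end ZipfMandelbrot

theorem elr_zipf_mandelbrot_tm2_general (N : ℕ) (hN : 1 ≤ N)
    (q₁ q₂ s₁ s₂ : ℝ) (hq₁ : 0 ≤ q₁) (hq₂ : 0 ≤ q₂)
    (p r : Fin N → ℝ)
    (hp : ∀ i : Fin N, p i =
      1 / ((((i : ℕ) : ℝ) + 1 + q₁) ^ s₁
        * ∑ j : Fin N, 1 / ((((j : ℕ) : ℝ) + 1 + q₁) ^ s₁)))
    (hr : ∀ i : Fin N, r i =
      1 / ((((i : ℕ) : ℝ) + 1 + q₂) ^ s₂
        * ∑ j : Fin N, 1 / ((((j : ℕ) : ℝ) + 1 + q₂) ^ s₂)))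
    (m M : ℝ)
    (hm : IsLeast (Set.range fun i : Fin N => p i / r i) m)
    (hM : IsGreatest (Set.range fun i : Fin N => p i / r i) M)
    (hmM : m < M)
    (f : ℝ → ℝ) (a b : ℝ) (ham : a < m) (hMb : M < b)
    (hf : ContDiffOn ℝ 3 f (Set.Ioo a b))
    (hf3 : ∀ x ∈ Set.Ioo a b, 0 ≤ iteratedDeriv 3 f x) :
    let Δ := (f M - f m) / (M - m)
    (1 - m) * (Δ - deriv f m / 2)
          - (1 / 2) * ∑ i, (p i - m * r i) * deriv f (p i / r i)
        ≤ (M - 1) / (M - m) * f m + (1 - m) / (M - m) * f M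
            - ∑ i, r i * f (p i / r i)
      ∧ (M - 1) / (M - m) * f m + (1 - m) / (M - m) * f M
            - ∑ i, r i * f (p i / r i)
        ≤ (1 / 2) * ∑ i, (M * r i - p i) * deriv f (p i / r i)
            - (M - 1) * (Δ - deriv f M / 2) := by
  have hrange : ∀ i, p i / r i ∈ Set.Icc m M := fun i => ⟨hm.2 ⟨i, rfl⟩, hM.2 ⟨i, rfl⟩⟩
  obtain rfl : p = zipfMandelbrot N q₁ s₁ := funext hp
  obtain rfl : r = zipfMandelbrot N q₂ s₂ := funext hr
  have htrap : ∀ u ∈ Set.Icc m M, ∀ v ∈ Set.Icc m M, u ≤ v →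
      f v - f u ≤ (v - u) * (deriv f u + deriv f v) / 2 := fun u hu v hv =>
    hf.sub_le_trapezoid isOpen_Ioo (convex_Ioo a b) hf3
      (Set.Icc_subset_Ioo ham hMb hu) (Set.Icc_subset_Ioo ham hMb hv)
  have hpos : ∀ i, 0 < zipfMandelbrot N q₂ s₂ i := zipfMandelbrot_pos s₂ hq₂
  have hp1 := sum_zipfMandelbrot s₁ hN hq₁
  have hr1 := sum_zipfMandelbrot s₂ hN hq₂
  exact ⟨le_chord_sub_divergence_of_trapezoid hpos hp1 hr1 hmM fun i =>
      htrap _ (Set.left_mem_Icc.2 hmM.le) _ (hrange i) (hrange i).1,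
    chord_sub_divergence_le_of_trapezoid hpos hp1 hr1 hmM fun i =>
      htrap _ (hrange i) _ (Set.right_mem_Icc.2 hmM.le) (hrange i).2⟩

/-- Edmundson–Lah–Ribarič type inequality for the generalized f-divergence of two
Zipf–Mandelbrot laws (Corollary 4.1 of the paper). -/
theorem elr_zipf_mandelbrot_tm2 (N : ℕ) (hN : 1 ≤ N)
    (q₁ q₂ s₁ s₂ : ℝ) (hq₁ : 0 ≤ q₁) (hq₂ : 0 ≤ q₂) (hs₁ : 0 < s₁) (hs₂ : 0 < s₂)
    (p r : Fin N → ℝ)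
    (hp : ∀ i : Fin N, p i =
      1 / ((((i : ℕ) : ℝ) + 1 + q₁) ^ s₁
        * ∑ j : Fin N, 1 / ((((j : ℕ) : ℝ) + 1 + q₁) ^ s₁)))
    (hr : ∀ i : Fin N, r i =
      1 / ((((i : ℕ) : ℝ) + 1 + q₂) ^ s₂
        * ∑ j : Fin N, 1 / ((((j : ℕ) : ℝ) + 1 + q₂) ^ s₂)))
    (m M : ℝ)
    (hm : IsLeast (Set.range fun i : Fin N => p i / r i) m)
    (hM : IsGreatest (Set.range fun i : Fin N => p i / r i) M)
    (hmM : m < M)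
    (f : ℝ → ℝ) (a b : ℝ) (ham : a < m) (hMb : M < b)
    (hf : ContDiffOn ℝ 3 f (Set.Ioo a b))
    (hf3 : ∀ x ∈ Set.Ioo a b, 0 ≤ iteratedDeriv 3 f x) :
    let Δ := (f M - f m) / (M - m)
    (1 - m) * (Δ - deriv f m / 2)
          - (1 / 2) * ∑ i, (p i - m * r i) * deriv f (p i / r i)
        ≤ (M - 1) / (M - m) * f m + (1 - m) / (M - m) * f M
            - ∑ i, r i * f (p i / r i)
      ∧ (M - 1) / (M - m) * f m + (1 - m) / (M - m) * f M
            - ∑ i, r i * f (p i / r i)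
        ≤ (1 / 2) * ∑ i, (M * r i - p i) * deriv f (p i / r i)
            - (M - 1) * (Δ - deriv f M / 2) :=
  elr_zipf_mandelbrot_tm2_general N hN q₁ q₂ s₁ s₂ hq₁ hq₂ p r hp hr m M hm hM hmM f a b ham hMb hf
    hf3
end
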